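/- Let 0 < a < b, n ∈ (−1,∞) \ {0}, λ ∈ [0,1] and q ≥ 1. With H = 2ab/(a+b), G = √(ab), A(x,y) = (x+y)/2, and the n-logarithmic mean Lₙ = ( (b^{n+1} − a^{n+1}) / ((n+1)(b−a)) )^{1/n}, the following inequality holds: |(1−λ)·H^{n+2} + λ·A(a^{n+2}, b^{n+2}) − G²·Lₙⁿ| ≤ (ab(b−a)(n+2)/2)·{ C₁(λ;a,b)^{1−1/q}·[C₂(λ;a,b)·a^{(n+1)q} + C₃(λ;a,b)·b^{(n+1)q}]^{1/q} + C₁(λ;b,a)^{1−1/q}·[C₃(λ;b,a)·a^{(n+1)q} + C₂(λ;b,a)·b^{(n+1)q}]^{1/q} }. -/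

import Mathlib

/-!
Let `h(s) = ab / (a + s (b - a))`, the weighted harmonic mean of `a` and `b`, and `g = h ^ (n + 2)`.
Then `g 0 = b ^ (n + 2)`, `g 1 = a ^ (n + 2)`, `g (1/2) = H ^ (n + 2)` and `∫₀¹ g = G² Lₙⁿ`.
Integrating `(s - λ/2) g'(s)` by parts over `[0, 1/2]`, and doing the same after the reflection
`s ↦ 1 - s` (which exchanges `a` and `b`), writes the left-hand side as a sum of two such kernel
integrals. Since `|g'| = (n + 2) ab |b - a| h ^ (n + 1) / (a + s (b - a))²` and
`h ^ (n + 1) ≤ s a ^ (n + 1) + (1 - s) b ^ (n + 1)` (HM ≤ GM ≤ AM), each is bounded by integrals of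
`|s - λ/2| (α + β s) / (a + s (b - a))²`, which evaluate in closed form to `(α C₁ + β C₂) / 2`.
The weighted Hölder inequality then upgrades the case `q = 1` to every `q ≥ 1`.
-/

open MeasureTheory Set

/-- `C₁(λ; u, ϑ)` from Theorem 2.2. -/
noncomputable def C1 (lam u v : ℝ) : ℝ :=
  (1 / (v - u) ^ 2) *
    (-4 + (lam * (v - u) + 2 * u) * (3 * u + v) / (u * (u + v))
      + 2 * Real.log (2 * u * (u + v) / (2 * u + lam * (v - u)) ^ 2))

/-- `C₂(λ; u, ϑ)` from Theorem 2.2. -/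
noncomputable def C2 (lam u v : ℝ) : ℝ :=
  (1 / (v - u) ^ 3) *
    ((lam * (v - u) + 4 * u) * Real.log ((lam * (v - u) + 2 * u) ^ 2 / (2 * u * (u + v)))
      - (lam * (v - u) + 2 * u) * (5 * u + 3 * v) / (u + v) + 7 * u + v)

/-- `C₃(λ; u, ϑ) = C₁(λ; u, ϑ) - C₂(λ; u, ϑ)`. -/
noncomputable def C3 (lam u v : ℝ) : ℝ := C1 lam u v - C2 lam u v

open intervalIntegral

lemma mul_add_mul_le_rpow_mean {w₁ w₂ x y q : ℝ} (hw₁ : 0 ≤ w₁) (hw₂ : 0 ≤ w₂) (hx : 0 ≤ x)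
    (hy : 0 ≤ y) (hq : 1 ≤ q) :
    w₁ * x + w₂ * y ≤ (w₁ + w₂) ^ (1 - 1 / q) * (w₁ * x ^ q + w₂ * y ^ q) ^ (1 / q) := by
  have h := Real.inner_le_weight_mul_Lp_of_nonneg Finset.univ hq ![w₁, w₂] ![x, y]
    (by simp [Fin.forall_fin_two, hw₁, hw₂]) (by simp [Fin.forall_fin_two, hx, hy])
  simpa [Fin.sum_univ_two, one_div] using h

noncomputable def harmonicPath (u v s : ℝ) : ℝ := u * v / (u + s * (v - u))

section HarmonicPath

variable {u v s : ℝ}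

lemma add_mul_sub_pos (hu : 0 < u) (hv : 0 < v) (hs : s ∈ Icc (0 : ℝ) 1) :
    0 < u + s * (v - u) := by
  nlinarith [hs.1, hs.2, mul_nonneg hs.1 hv.le, mul_nonneg (sub_nonneg.2 hs.2) hu.le]

lemma harmonicPath_pos (hu : 0 < u) (hv : 0 < v) (hs : s ∈ Icc (0 : ℝ) 1) :
    0 < harmonicPath u v s :=
  div_pos (mul_pos hu hv) (add_mul_sub_pos hu hv hs)

lemma harmonicPath_zero (hu : u ≠ 0) : harmonicPath u v 0 = v := by
  simp [harmonicPath, hu]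

lemma harmonicPath_half : harmonicPath u v (1 / 2) = 2 * u * v / (u + v) := by
  rw [harmonicPath, show u + 1 / 2 * (v - u) = (u + v) / 2 by ring, div_div_eq_mul_div]
  ring

lemma hasDerivAt_harmonicPath_rpow (p : ℝ) (hu : 0 < u) (hv : 0 < v) (hs : s ∈ Icc (0 : ℝ) 1) :
    HasDerivAt (fun t => harmonicPath u v t ^ p)
      (-(p * (v - u) / (u * v)) * harmonicPath u v s ^ (p + 1)) s := by
  have hD := add_mul_sub_pos hu hv hs
  have hh := harmonicPath_pos hu hv hs
  have hlin : HasDerivAt (fun t => u + t * (v - u)) (v - u) s := by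
    simpa using ((hasDerivAt_id s).mul_const (v - u)).const_add u
  have hpath : HasDerivAt (harmonicPath u v) (-(u * v) * (v - u) / (u + s * (v - u)) ^ 2) s :=
    ((hlin.inv hD.ne').const_mul (u * v)).congr_deriv (by ring)
  refine ((Real.hasDerivAt_rpow_const (p := p) (Or.inl hh.ne')).comp s hpath).congr_deriv ?_
  rw [Real.rpow_add hh, Real.rpow_sub_one hh.ne', Real.rpow_one]
  simp only [harmonicPath]
  field_simp

lemma rpow_harmonicPath_le {m : ℝ} (hu : 0 < u) (hv : 0 < v) (hm : 0 ≤ m)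
    (hs : s ∈ Icc (0 : ℝ) 1) :
    harmonicPath u v s ^ m ≤ s * u ^ m + (1 - s) * v ^ m := by
  have hh := harmonicPath_pos hu hv hs
  have hs1 : 0 ≤ 1 - s := sub_nonneg.2 hs.2
  -- weighted HM ≤ GM, from AM-GM applied to `u⁻¹, v⁻¹`
  have hm_gm : harmonicPath u v s ≤ u ^ s * v ^ (1 - s) := by
    have h := Real.geom_mean_le_arith_mean2_weighted hs.1 hs1 (inv_nonneg.2 hu.le)
      (inv_nonneg.2 hv.le) (by ring)
    rw [Real.inv_rpow hu.le, Real.inv_rpow hv.le, ← mul_inv,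
      show s * u⁻¹ + (1 - s) * v⁻¹ = (harmonicPath u v s)⁻¹ by
        simp only [harmonicPath]; field_simp; ring] at h
    exact (inv_le_inv₀ (by positivity) hh).1 h
  calc harmonicPath u v s ^ m ≤ (u ^ s * v ^ (1 - s)) ^ m := by gcongr
    _ = (u ^ m) ^ s * (v ^ m) ^ (1 - s) := by
      rw [Real.mul_rpow (by positivity) (by positivity), ← Real.rpow_mul hu.le,
        ← Real.rpow_mul hv.le, mul_comm s, mul_comm (1 - s), Real.rpow_mul hu.le,
        Real.rpow_mul hv.le]
    _ ≤ s * u ^ m + (1 - s) * v ^ m :=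
      Real.geom_mean_le_arith_mean2_weighted hs.1 hs1 (by positivity) (by positivity) (by ring)

lemma abs_deriv_harmonicPath_rpow_le {n : ℝ} (hu : 0 < u) (hv : 0 < v) (hn : -1 < n)
    (hs : s ∈ Icc (0 : ℝ) 1) :
    |(n + 2) * (v - u) / (u * v) * harmonicPath u v s ^ (n + 2 + 1)|
      ≤ u * v * |v - u| * (n + 2)
        * ((v ^ (n + 1) + (u ^ (n + 1) - v ^ (n + 1)) * s) / (u + s * (v - u)) ^ 2) := by
  have hD := add_mul_sub_pos hu hv hs
  have hh := harmonicPath_pos hu hv hs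
  have hn2 : 0 < n + 2 := by linarith
  have hpow : harmonicPath u v s ^ (n + 2 + 1)
      = u ^ 2 * v ^ 2 * harmonicPath u v s ^ (n + 1) / (u + s * (v - u)) ^ 2 := by
    have hsq : harmonicPath u v s ^ 2 = u ^ 2 * v ^ 2 / (u + s * (v - u)) ^ 2 := by
      rw [harmonicPath, div_pow, mul_pow]
    rw [show n + 2 + 1 = n + 1 + 2 by ring, Real.rpow_add hh, Real.rpow_two, hsq]
    ring
  have hpos : 0 < u ^ 2 * v ^ 2 * harmonicPath u v s ^ (n + 1) / (u + s * (v - u)) ^ 2 :=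
    div_pos (mul_pos (by positivity) (Real.rpow_pos_of_pos hh _)) (pow_pos hD 2)
  calc |(n + 2) * (v - u) / (u * v) * harmonicPath u v s ^ (n + 2 + 1)|
      = u * v * |v - u| * (n + 2) * (harmonicPath u v s ^ (n + 1) / (u + s * (v - u)) ^ 2) := by
        rw [hpow, abs_mul, abs_div, abs_mul, abs_of_pos hn2, abs_of_pos (mul_pos hu hv),
          abs_of_pos hpos]
        field_simp
    _ ≤ u * v * |v - u| * (n + 2)
        * ((v ^ (n + 1) + (u ^ (n + 1) - v ^ (n + 1)) * s) / (u + s * (v - u)) ^ 2) := by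
        refine mul_le_mul_of_nonneg_left (div_le_div_of_nonneg_right ?_ (by positivity))
          (by positivity)
        linarith [rpow_harmonicPath_le hu hv (by linarith : 0 ≤ n + 1) hs]

lemma continuousOn_harmonicPath_rpow (p : ℝ) (hu : 0 < u) (hv : 0 < v) :
    ContinuousOn (fun s => harmonicPath u v s ^ p) (Icc 0 1) := fun _ hs =>
  (hasDerivAt_harmonicPath_rpow p hu hv hs).continuousAt.continuousWithinAt

lemma integral_harmonicPath_rpow {p x y : ℝ} (hu : 0 < u) (hv : 0 < v) (huv : u ≠ v) (hp : p ≠ 0)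
    (hx : 0 ≤ x) (hxy : x ≤ y) (hy : y ≤ 1) :
    ∫ s in x..y, harmonicPath u v s ^ (p + 1)
      = u * v / (p * (v - u)) * (harmonicPath u v x ^ p - harmonicPath u v y ^ p) := by
  have hIcc : ∀ t ∈ uIcc x y, t ∈ Icc (0 : ℝ) 1 := fun t ht => by
    rw [uIcc_of_le hxy] at ht; exact ⟨hx.trans ht.1, ht.2.trans hy⟩
  have hcont : ContinuousOn (fun t => harmonicPath u v t ^ (p + 1)) (uIcc x y) :=
    (continuousOn_harmonicPath_rpow (p + 1) hu hv).mono hIcc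
  have : v - u ≠ 0 := sub_ne_zero.2 huv.symm
  rw [integral_eq_sub_of_hasDerivAt
    (f := fun t => -(u * v / (p * (v - u))) * harmonicPath u v t ^ p)
    (fun t ht => ((hasDerivAt_harmonicPath_rpow p hu hv (hIcc t ht)).const_mul _).congr_deriv
      (by field_simp)) hcont.intervalIntegrable]
  ring

lemma integral_harmonicPath_rpow_add_swap {n : ℝ} (hu : 0 < u) (hv : 0 < v) (huv : u ≠ v)
    (hn : n + 1 ≠ 0) :
    (∫ s in (0 : ℝ)..1 / 2, harmonicPath u v s ^ (n + 2))
      + ∫ s in (0 : ℝ)..1 / 2, harmonicPath v u s ^ (n + 2)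
      = u * v * ((v ^ (n + 1) - u ^ (n + 1)) / ((n + 1) * (v - u))) := by
  have hvu : harmonicPath v u (1 / 2) = harmonicPath u v (1 / 2) := by
    rw [harmonicPath_half, harmonicPath_half, mul_right_comm, add_comm]
  rw [show n + 2 = n + 1 + 1 by ring,
    integral_harmonicPath_rpow hu hv huv hn le_rfl (by norm_num) (by norm_num),
    integral_harmonicPath_rpow hv hu huv.symm hn le_rfl (by norm_num) (by norm_num),
    harmonicPath_zero hu.ne', harmonicPath_zero hv.ne', hvu]
  have : v - u ≠ 0 := sub_ne_zero.2 huv.symm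
  have : u - v ≠ 0 := sub_ne_zero.2 huv
  field_simp
  ring

end HarmonicPath

lemma integral_abs_sub_mul_eq {φ k : ℝ → ℝ} {x y c : ℝ} (hxc : x ≤ c) (hcy : c ≤ y)
    (hφ : ∀ t ∈ Icc x y, HasDerivAt φ ((t - c) * k t) t) (hk : ContinuousOn k (Icc x y)) :
    ∫ s in x..y, |s - c| * k s = φ x + φ y - 2 * φ c := by
  have hf : ContinuousOn (fun s => (s - c) * k s) (Icc x y) :=
    (continuous_id.sub continuous_const).continuousOn.mul hk
  have hint : ∀ {x' y'}, Icc x' y' ⊆ Icc x y → x' ≤ y' →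
      ∫ s in x'..y', (s - c) * k s = φ y' - φ x' := fun hsub hle =>
    integral_eq_sub_of_hasDerivAt (fun t ht => hφ t (hsub (by rwa [uIcc_of_le hle] at ht)))
      ((hf.mono hsub).intervalIntegrable_of_Icc hle)
  have hleft : ∫ s in x..c, |s - c| * k s = -(φ c - φ x) := by
    rw [← hint (Icc_subset_Icc le_rfl hcy) hxc, ← intervalIntegral.integral_neg]
    refine integral_congr fun t ht => ?_
    rw [uIcc_of_le hxc] at ht
    simp only [abs_of_nonpos (sub_nonpos.2 ht.2)]
    ring
  have hright : ∫ s in c..y, |s - c| * k s = φ y - φ c := by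
    rw [← hint (Icc_subset_Icc hxc le_rfl) hcy]
    refine integral_congr fun t ht => ?_
    rw [uIcc_of_le hcy] at ht
    simp only [abs_of_nonneg (sub_nonneg.2 ht.1)]
  have hcont : ContinuousOn (fun s => |s - c| * k s) (Icc x y) :=
    (continuous_id.sub continuous_const).abs.continuousOn.mul hk
  rw [← integral_add_adjacent_intervals
    ((hcont.mono (Icc_subset_Icc le_rfl hcy)).intervalIntegrable_of_Icc hxc)
    ((hcont.mono (Icc_subset_Icc hxc le_rfl)).intervalIntegrable_of_Icc hcy), hleft, hright]
  ring

noncomputable def invSqPrimitive (u e c t : ℝ) : ℝ :=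
  Real.log (u + t * e) / e ^ 2 + (u + c * e) / (e ^ 2 * (u + t * e))

noncomputable def idDivSqPrimitive (u e c t : ℝ) : ℝ :=
  ((u + t * e) - (2 * u + c * e) * Real.log (u + t * e) - (u ^ 2 + u * c * e) / (u + t * e)) / e ^ 3

section Primitives

variable {u e c t : ℝ}

lemma hasDerivAt_invSqPrimitive (he : e ≠ 0) (ht : 0 < u + t * e) :
    HasDerivAt (invSqPrimitive u e c) ((t - c) / (u + t * e) ^ 2) t := by
  have hlin : HasDerivAt (fun t => u + t * e) e t := by
    simpa using ((hasDerivAt_id t).mul_const e).const_add u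
  refine (((hlin.log ht.ne').div_const (e ^ 2)).add
    ((hlin.const_mul (e ^ 2)).inv (by positivity) |>.const_mul (u + c * e))).congr_deriv ?_
  field_simp
  ring

lemma hasDerivAt_idDivSqPrimitive (he : e ≠ 0) (ht : 0 < u + t * e) :
    HasDerivAt (idDivSqPrimitive u e c) ((t - c) * t / (u + t * e) ^ 2) t := by
  have hlin : HasDerivAt (fun t => u + t * e) e t := by
    simpa using ((hasDerivAt_id t).mul_const e).const_add u
  refine (((hlin.sub ((hlin.log ht.ne').const_mul (2 * u + c * e))).sub
    ((hlin.inv ht.ne').const_mul (u ^ 2 + u * c * e))).div_const (e ^ 3)).congr_deriv ?_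
  have : u + e * t ≠ 0 := by rw [mul_comm]; exact ht.ne'
  field_simp
  ring

end Primitives

section Kernel

variable {lam u v : ℝ}

lemma two_mul_invSqPrimitive_eq_C1 (hu : 0 < u) (hv : 0 < v) (huv : u ≠ v)
    (hlam : lam ∈ Icc (0 : ℝ) 1) :
    2 * (invSqPrimitive u (v - u) (lam / 2) (1 / 2) + invSqPrimitive u (v - u) (lam / 2) 0
      - 2 * invSqPrimitive u (v - u) (lam / 2) (lam / 2)) = C1 lam u v := by
  have he : v - u ≠ 0 := sub_ne_zero.2 huv.symm
  have huv' : u + v ≠ 0 := by positivity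
  simp only [invSqPrimitive, C1]
  rw [show u + 1 / 2 * (v - u) = (u + v) / 2 by ring, show u + 0 * (v - u) = u by ring,
    show u + lam / 2 * (v - u) = (lam * (v - u) + 2 * u) / 2 by ring,
    show 2 * u + lam * (v - u) = lam * (v - u) + 2 * u by ring]
  have hm : lam * (v - u) + 2 * u ≠ 0 := by nlinarith [hlam.1, hlam.2]
  generalize lam * (v - u) + 2 * u = m at hm ⊢
  rw [Real.log_div (by positivity) (pow_ne_zero 2 hm), Real.log_div hm two_ne_zero,
    Real.log_div huv' two_ne_zero, Real.log_mul (by positivity) huv',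
    Real.log_mul two_ne_zero hu.ne', Real.log_pow]
  field_simp
  ring

lemma two_mul_idDivSqPrimitive_eq_C2 (hu : 0 < u) (hv : 0 < v) (huv : u ≠ v)
    (hlam : lam ∈ Icc (0 : ℝ) 1) :
    2 * (idDivSqPrimitive u (v - u) (lam / 2) (1 / 2) + idDivSqPrimitive u (v - u) (lam / 2) 0
      - 2 * idDivSqPrimitive u (v - u) (lam / 2) (lam / 2)) = C2 lam u v := by
  have he : v - u ≠ 0 := sub_ne_zero.2 huv.symm
  have huv' : u + v ≠ 0 := by positivity
  simp only [idDivSqPrimitive, C2]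
  rw [show u + 1 / 2 * (v - u) = (u + v) / 2 by ring, show u + 0 * (v - u) = u by ring,
    show u + lam / 2 * (v - u) = (lam * (v - u) + 2 * u) / 2 by ring,
    show 2 * u + lam / 2 * (v - u) = (lam * (v - u) + 4 * u) / 2 by ring,
    show u ^ 2 + u * (lam / 2) * (v - u) = u * (lam * (v - u) + 2 * u) / 2 by ring]
  have hm : lam * (v - u) + 2 * u ≠ 0 := by nlinarith [hlam.1, hlam.2]
  generalize lam * (v - u) + 2 * u = m at hm ⊢
  rw [Real.log_div (pow_ne_zero 2 hm) (by positivity), Real.log_div hm two_ne_zero,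
    Real.log_div huv' two_ne_zero, Real.log_mul (by positivity) huv',
    Real.log_mul two_ne_zero hu.ne', Real.log_pow]
  field_simp
  ring

lemma integral_abs_sub_mul_affine_div_sq (hu : 0 < u) (hv : 0 < v) (huv : u ≠ v)
    (hlam : lam ∈ Icc (0 : ℝ) 1) (α β : ℝ) :
    ∫ s in (0 : ℝ)..1 / 2, |s - lam / 2| * ((α + β * s) / (u + s * (v - u)) ^ 2)
      = (α * C1 lam u v + β * C2 lam u v) / 2 := by
  have hD : ∀ t ∈ Icc (0 : ℝ) (1 / 2), 0 < u + t * (v - u) := fun t ht =>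
    add_mul_sub_pos hu hv ⟨ht.1, by linarith [ht.2]⟩
  have he : v - u ≠ 0 := sub_ne_zero.2 huv.symm
  rw [integral_abs_sub_mul_eq (k := fun t => (α + β * t) / (u + t * (v - u)) ^ 2)
    (φ := fun t => α * invSqPrimitive u (v - u) (lam / 2) t
      + β * idDivSqPrimitive u (v - u) (lam / 2) t) (by linarith [hlam.1]) (by linarith [hlam.2])
    (fun t ht => (((hasDerivAt_invSqPrimitive he (hD t ht)).const_mul α).add
      ((hasDerivAt_idDivSqPrimitive he (hD t ht)).const_mul β)).congr_deriv (by ring))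
    (ContinuousOn.div (by fun_prop) (by fun_prop) fun t ht => (pow_pos (hD t ht) 2).ne'),
    ← two_mul_invSqPrimitive_eq_C1 hu hv huv hlam, ← two_mul_idDivSqPrimitive_eq_C2 hu hv huv hlam]
  ring

lemma C2_nonneg (hu : 0 < u) (hv : 0 < v) (huv : u ≠ v) (hlam : lam ∈ Icc (0 : ℝ) 1) :
    0 ≤ C2 lam u v := by
  have h := integral_abs_sub_mul_affine_div_sq hu hv huv hlam 0 1
  have : 0 ≤ ∫ s in (0 : ℝ)..1 / 2, |s - lam / 2| * ((0 + 1 * s) / (u + s * (v - u)) ^ 2) :=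
    integral_nonneg (by norm_num) fun s hs => by have := hs.1; positivity
  linarith

lemma C3_nonneg (hu : 0 < u) (hv : 0 < v) (huv : u ≠ v) (hlam : lam ∈ Icc (0 : ℝ) 1) :
    0 ≤ C3 lam u v := by
  have h := integral_abs_sub_mul_affine_div_sq hu hv huv hlam 1 (-1)
  have : 0 ≤ ∫ s in (0 : ℝ)..1 / 2, |s - lam / 2| * ((1 + -1 * s) / (u + s * (v - u)) ^ 2) :=
    integral_nonneg (by norm_num) fun s hs => by
      have : 0 ≤ 1 + -1 * s := by linarith [hs.2]
      positivity
  rw [C3]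
  linarith

end Kernel

lemma abs_half_sub_integral_harmonicPath_rpow_le {lam u v n : ℝ} (hu : 0 < u) (hv : 0 < v)
    (huv : u ≠ v) (hn : -1 < n) (hlam : lam ∈ Icc (0 : ℝ) 1) :
    |(1 - lam) / 2 * harmonicPath u v (1 / 2) ^ (n + 2) + lam / 2 * v ^ (n + 2)
        - ∫ s in (0 : ℝ)..1 / 2, harmonicPath u v s ^ (n + 2)|
      ≤ u * v * |v - u| * (n + 2) / 2 * (C2 lam u v * u ^ (n + 1) + C3 lam u v * v ^ (n + 1)) := by
  set g' : ℝ → ℝ := fun s => -((n + 2) * (v - u) / (u * v)) * harmonicPath u v s ^ (n + 2 + 1)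
    with hg'
  set K := u * v * |v - u| * (n + 2)
  have hsub : Icc (0 : ℝ) (1 / 2) ⊆ Icc 0 1 := Icc_subset_Icc le_rfl (by norm_num)
  have hg'_cont : ContinuousOn g' (Icc 0 (1 / 2)) :=
    continuousOn_const.mul ((continuousOn_harmonicPath_rpow (n + 2 + 1) hu hv).mono hsub)
  have hibp : ∫ s in (0 : ℝ)..1 / 2, (s - lam / 2) * g' s
      = (1 - lam) / 2 * harmonicPath u v (1 / 2) ^ (n + 2) + lam / 2 * v ^ (n + 2)
        - ∫ s in (0 : ℝ)..1 / 2, harmonicPath u v s ^ (n + 2) := by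
    rw [integral_mul_deriv_eq_deriv_mul (u := fun s => s - lam / 2) (u' := fun _ => 1)
      (v := fun s => harmonicPath u v s ^ (n + 2)) (v' := g')
      (fun t _ => (hasDerivAt_id t).sub_const _)
      (fun t ht => hasDerivAt_harmonicPath_rpow (n + 2) hu hv
        (hsub (by rwa [uIcc_of_le (by norm_num)] at ht)))
      intervalIntegrable_const (hg'_cont.intervalIntegrable_of_Icc (by norm_num)),
      harmonicPath_zero hu.ne']
    simp only [one_mul]
    ring
  have hpt : ∀ s ∈ Icc (0 : ℝ) (1 / 2), |(s - lam / 2) * g' s|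
      ≤ K * (|s - lam / 2| * ((v ^ (n + 1) + (u ^ (n + 1) - v ^ (n + 1)) * s)
        / (u + s * (v - u)) ^ 2)) := fun s hs => by
    simp only [hg']
    rw [abs_mul, neg_mul, abs_neg, mul_left_comm]
    exact mul_le_mul_of_nonneg_left (abs_deriv_harmonicPath_rpow_le hu hv hn (hsub hs))
      (abs_nonneg _)
  have hint : ∀ f : ℝ → ℝ, ContinuousOn f (Icc 0 (1 / 2)) →
      IntervalIntegrable f volume 0 (1 / 2) := fun f hf =>
    hf.intervalIntegrable_of_Icc (by norm_num)
  rw [← hibp]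
  calc |∫ s in (0 : ℝ)..1 / 2, (s - lam / 2) * g' s|
      ≤ ∫ s in (0 : ℝ)..1 / 2, |(s - lam / 2) * g' s| := abs_integral_le_integral_abs (by norm_num)
    _ ≤ ∫ s in (0 : ℝ)..1 / 2, K * (|s - lam / 2| * ((v ^ (n + 1) + (u ^ (n + 1) - v ^ (n + 1)) * s)
          / (u + s * (v - u)) ^ 2)) :=
        integral_mono_on (by norm_num)
          (hint _ ((continuousOn_id.sub continuousOn_const).mul hg'_cont).abs)
          (hint _ (ContinuousOn.mul continuousOn_const (ContinuousOn.mul (by fun_prop)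
            (ContinuousOn.div (by fun_prop) (by fun_prop)
              fun t ht => (pow_pos (add_mul_sub_pos hu hv (hsub ht)) 2).ne'))))
          hpt
    _ = K / 2 * (C2 lam u v * u ^ (n + 1) + C3 lam u v * v ^ (n + 1)) := by
        rw [intervalIntegral.integral_const_mul,
          integral_abs_sub_mul_affine_div_sq hu hv huv hlam, C3]
        ring

lemma C2_mul_add_C3_mul_le {lam u v m q : ℝ} (hu : 0 < u) (hv : 0 < v) (huv : u ≠ v)
    (hlam : lam ∈ Icc (0 : ℝ) 1) (hq : 1 ≤ q) :
    C2 lam u v * u ^ m + C3 lam u v * v ^ m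
      ≤ C1 lam u v ^ (1 - 1 / q)
        * (C2 lam u v * u ^ (m * q) + C3 lam u v * v ^ (m * q)) ^ (1 / q) := by
  have h := mul_add_mul_le_rpow_mean (C2_nonneg hu hv huv hlam) (C3_nonneg hu hv huv hlam)
    (Real.rpow_nonneg hu.le m) (Real.rpow_nonneg hv.le m) hq
  rwa [C3, add_sub_cancel, ← Real.rpow_mul hu.le, ← Real.rpow_mul hv.le] at h

theorem prop_means7 (a b : ℝ) (ha : 0 < a) (hab : a < b)
    (n : ℝ) (hn1 : -1 < n) (hn0 : n ≠ 0)
    (lam : ℝ) (hlam : lam ∈ Icc (0:ℝ) 1) (q : ℝ) (hq : 1 ≤ q) :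
    |(1 - lam) * (2 * a * b / (a + b)) ^ (n + 2) +
        lam * ((a ^ (n + 2) + b ^ (n + 2)) / 2) -
        Real.sqrt (a * b) ^ 2 *
          (((b ^ (n + 1) - a ^ (n + 1)) / ((n + 1) * (b - a))) ^ (1 / n)) ^ n| ≤
      (a * b * (b - a) * (n + 2) / 2) *
        (C1 lam a b ^ (1 - 1 / q) *
            (C2 lam a b * a ^ ((n + 1) * q) + C3 lam a b * b ^ ((n + 1) * q)) ^ (1 / q)
          + C1 lam b a ^ (1 - 1 / q) *
            (C3 lam b a * a ^ ((n + 1) * q) + C2 lam b a * b ^ ((n + 1) * q)) ^ (1 / q)) := by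
  have hb : 0 < b := ha.trans hab
  have hHba : harmonicPath b a (1 / 2) = 2 * a * b / (a + b) := by
    rw [harmonicPath_half, mul_right_comm, add_comm]
  -- the two half-interval integrals add up to `∫₀¹ harmonicPath a b s ^ (n + 2) = G² Lₙⁿ`
  have hmean : Real.sqrt (a * b) ^ 2 *
        (((b ^ (n + 1) - a ^ (n + 1)) / ((n + 1) * (b - a))) ^ (1 / n)) ^ n
      = (∫ s in (0 : ℝ)..1 / 2, harmonicPath a b s ^ (n + 2))
        + ∫ s in (0 : ℝ)..1 / 2, harmonicPath b a s ^ (n + 2) := by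
    have hX : 0 ≤ (b ^ (n + 1) - a ^ (n + 1)) / ((n + 1) * (b - a)) :=
      div_nonneg (sub_nonneg.2 (Real.rpow_le_rpow ha.le hab.le (by linarith)))
        (mul_nonneg (by linarith) (by linarith))
    rw [Real.sq_sqrt (by positivity), ← Real.rpow_mul hX, one_div_mul_cancel hn0, Real.rpow_one,
      integral_harmonicPath_rpow_add_swap ha hb hab.ne (by linarith)]
  have hab_bd := abs_half_sub_integral_harmonicPath_rpow_le ha hb hab.ne hn1 hlam
  have hba_bd := abs_half_sub_integral_harmonicPath_rpow_le hb ha hab.ne' hn1 hlam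
  rw [harmonicPath_half] at hab_bd
  rw [hHba, mul_comm b a, abs_sub_comm a b, abs_of_pos (sub_pos.2 hab)] at hba_bd
  rw [abs_of_pos (sub_pos.2 hab)] at hab_bd
  have hK : 0 ≤ a * b * (b - a) * (n + 2) / 2 := by
    have : 0 ≤ n + 2 := by linarith
    have : 0 ≤ b - a := by linarith
    positivity
  have hT_ab := mul_le_mul_of_nonneg_left
    (C2_mul_add_C3_mul_le (m := n + 1) ha hb hab.ne hlam hq) hK
  have hT_ba := mul_le_mul_of_nonneg_left
    (C2_mul_add_C3_mul_le (m := n + 1) hb ha hab.ne' hlam hq) hK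
  rw [add_comm (C2 lam b a * b ^ ((n + 1) * q))] at hT_ba
  obtain ⟨hab_lo, hab_hi⟩ := abs_le.1 hab_bd
  obtain ⟨hba_lo, hba_hi⟩ := abs_le.1 hba_bd
  rw [hmean, abs_le]
  constructor <;> linarith
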